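/- arXiv:1304.3754 — 2 statements merged into one kernel-verified Lean document; each statement's English description precedes it below -/
import Mathlib

section
/- Fix γ ≥ 0, a finite set Y ⊂ ℝ^d, and f : Y → {-1,1}. Then deg_{(γ,W)}(f) ≥ t+1 if and only if there exists Ψ : Y → ℝ with Σ_{y∈Y} |Ψ(y)| = 1 and, for every S ⊆ [d] with |S| ≤ t, Σ_{y∈Y} Ψ(y) f(y) − W·|Σ_{y∈Y} Ψ(y) χ_S(y)| > γ, where χ_S(y) = ∏_{i∈S} y_i. -/
/-!
This is finite-dimensional LP duality, proved by separating convex sets in `ℝ^Y`. The values on `Y`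
of polynomials of degree `≤ t` and weight `≤ W` form the image `K` of an `ℓ¹`-ball of
coefficient vectors, a compact convex set, and the `γ`-approximations of `f` form the sup-norm
ball `B` of radius `γ` around `f`. If `K` and `B` are disjoint, a hyperplane `Φ ⬝ᵥ · = u` separates them. Testing
against `0` and `±W·χ_S` in `K` gives `0 < u` and `W |⟨Φ, χ_S⟩| < u`, and testing against the point
of `B` where `Φ ⬝ᵥ ·` is smallest gives `⟨Φ, f⟩ - γ ‖Φ‖₁ > u`; dividing by `‖Φ‖₁` gives `Ψ`.
Conversely, pairing `Ψ` with a `γ`-approximation `q` gives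
`⟨Ψ, f⟩ ≤ γ + |⟨Ψ, q⟩| ≤ γ + W max_S |⟨Ψ, χ_S⟩|`, which contradicts the hypothesis on `Ψ`.
-/

open Classical in
/-- Degree of a multilinear polynomial given by its coefficient vector. -/
noncomputable def polyDegree {ι : Type*} [Fintype ι] (c : Finset ι → ℝ) : ℕ :=
  Finset.sup (Finset.univ.filter fun S => c S ≠ 0) Finset.card

/-- Evaluation of a multilinear polynomial given by its coefficient vector. -/
noncomputable def evalPoly {ι : Type*} [Fintype ι] (c : Finset ι → ℝ) (x : ι → ℝ) : ℝ :=
  ∑ S : Finset ι, c S * ∏ i ∈ S, x i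

/-- Weight (L1-norm of the coefficient vector) of a multilinear polynomial. -/
noncomputable def weight {ι : Type*} [Fintype ι] (c : Finset ι → ℝ) : ℝ :=
  ∑ S : Finset ι, |c S|

open Classical in
/-- The OR function on `{-1,1}^d`, with `-1` = TRUE. -/
noncomputable def ORd {d : ℕ} (x : Fin d → ℝ) : ℝ :=
  if ∃ i, x i = -1 then -1 else 1

/-- The Boolean cube `{-1,1}^d` inside `ℝ^d`. -/
def cube (d : ℕ) : Set (Fin d → ℝ) := {x | ∀ i, x i = 1 ∨ x i = -1}

open Classical in
/-- Hamming weight: number of coordinates equal to `-1`. -/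
noncomputable def hamming {d : ℕ} (x : Fin d → ℝ) : ℕ :=
  (Finset.univ.filter fun i => x i = -1).card

open Matrix Metric

section

variable {X : Type*} [Fintype X]

lemma exists_dotProduct_separation {K B : Set (X → ℝ)} (hKconv : Convex ℝ K) (hK : IsCompact K)
    (hBconv : Convex ℝ B) (hB : IsClosed B) (hKB : Disjoint K B) :
    ∃ (Φ : X → ℝ) (u : ℝ), (∀ k ∈ K, Φ ⬝ᵥ k < u) ∧ ∀ b ∈ B, u < Φ ⬝ᵥ b := by
  classical
  obtain ⟨φ, u, v, hφK, huv, hφB⟩ := geometric_hahn_banach_compact_closed hKconv hK hBconv hB hKB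
  have hφ (w : X → ℝ) : φ w = (fun x => φ (Pi.single x 1)) ⬝ᵥ w := by
    conv_lhs => rw [pi_eq_sum_univ' w]
    simp [dotProduct, mul_comm]
  exact ⟨_, u, fun k hk => hφ k ▸ hφK k hk, fun b hb => huv.trans (hφ b ▸ hφB b hb)⟩

lemma exists_mem_closedBall_dotProduct_eq (f Φ : X → ℝ) {γ : ℝ} (hγ : 0 ≤ γ) :
    ∃ b ∈ closedBall f γ, Φ ⬝ᵥ b = Φ ⬝ᵥ f - γ * ∑ x, |Φ x| := by
  refine ⟨f - γ • fun x => (SignType.sign (Φ x) : ℝ), ?_, ?_⟩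
  · rw [mem_closedBall, dist_pi_le_iff hγ]
    intro x
    rcases lt_trichotomy (Φ x) 0 with hx | hx | hx <;> simp [hx, abs_of_nonneg hγ, hγ]
  · rw [dotProduct_sub, dotProduct_smul, smul_eq_mul]
    congr 2
    exact Finset.sum_congr rfl fun x _ => self_mul_sign (Φ x)

variable {ι : Type*}

lemma exists_normalized_dual_certificate (χ : Matrix ι X ℝ) (f : X → ℝ) {p : ι → Prop} {W γ : ℝ}
    {Φ : X → ℝ} (hN : 0 < ∑ x, |Φ x|)
    (hΦ : ∀ i, p i → γ * ∑ x, |Φ x| < Φ ⬝ᵥ f - W * |(χ *ᵥ Φ) i|) :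
    ∃ Ψ : X → ℝ, ∑ x, |Ψ x| = 1 ∧ ∀ i, p i → γ < Ψ ⬝ᵥ f - W * |(χ *ᵥ Ψ) i| := by
  set N := ∑ x, |Φ x|
  refine ⟨N⁻¹ • Φ, ?_, fun i hi => ?_⟩
  · simp only [Pi.smul_apply, smul_eq_mul, abs_mul, abs_inv, abs_of_pos hN, ← Finset.mul_sum]
    exact inv_mul_cancel₀ hN.ne'
  · rw [smul_dotProduct, mulVec_smul, Pi.smul_apply, smul_eq_mul, smul_eq_mul, abs_mul, abs_inv,
      abs_of_pos hN]
    calc γ = N⁻¹ * (γ * N) := by field_simp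
      _ < N⁻¹ * (Φ ⬝ᵥ f - W * |(χ *ᵥ Φ) i|) := by gcongr; exact hΦ i hi
      _ = N⁻¹ * (Φ ⬝ᵥ f) - W * (N⁻¹ * |(χ *ᵥ Φ) i|) := by ring

end

section Duality

variable {X ι : Type*} [Fintype X] [Fintype ι]

def supportedL1Ball (p : ι → Prop) (W : ℝ) : Set (ι → ℝ) :=
  {c | (∀ i, ¬ p i → c i = 0) ∧ ∑ i, |c i| ≤ W}

variable {p : ι → Prop} {W : ℝ}

lemma zero_mem_supportedL1Ball (hW : 0 ≤ W) : (0 : ι → ℝ) ∈ supportedL1Ball p W :=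
  ⟨fun _ _ => rfl, by simpa using hW⟩

lemma single_mem_supportedL1Ball [DecidableEq ι] {i : ι} (hi : p i) {a : ℝ} (ha : |a| ≤ W) :
    Pi.single i a ∈ supportedL1Ball p W := by
  refine ⟨fun j hj => Pi.single_eq_of_ne (show j ≠ i by rintro rfl; exact hj hi) _, ?_⟩
  rwa [Finset.sum_eq_single_of_mem i (Finset.mem_univ i) fun j _ hj => by simp [hj],
    Pi.single_eq_same]

lemma convex_supportedL1Ball : Convex ℝ (supportedL1Ball p W) := by
  rintro c ⟨hc₀, hc⟩ c' ⟨hc₀', hc'⟩ a b ha hb hab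
  refine ⟨fun i hi => by simp [hc₀ i hi, hc₀' i hi], ?_⟩
  calc ∑ i, |(a • c + b • c') i| ≤ ∑ i, (a * |c i| + b * |c' i|) :=
        Finset.sum_le_sum fun i _ => by
          simpa [abs_mul, abs_of_nonneg ha, abs_of_nonneg hb] using abs_add_le (a * c i) (b * c' i)
    _ = a * ∑ i, |c i| + b * ∑ i, |c' i| := by
        rw [Finset.sum_add_distrib, Finset.mul_sum, Finset.mul_sum]
    _ ≤ a * W + b * W := by gcongr
    _ = W := by rw [← add_mul, hab, one_mul]

lemma isCompact_supportedL1Ball : IsCompact (supportedL1Ball p W) := by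
  refine isCompact_of_isClosed_isBounded ?_ (isBounded_iff_forall_norm_le.2 ⟨W, ?_⟩)
  · refine IsClosed.inter ?_
      (isClosed_le (continuous_finsetSum _ fun i _ => (continuous_apply i).abs) continuous_const)
    show IsClosed {c : ι → ℝ | ∀ i, ¬ p i → c i = 0}
    simp only [Set.ofPred_forall]
    exact isClosed_iInter fun i => isClosed_iInter fun _ =>
      isClosed_eq (continuous_apply i) continuous_const
  · rintro c ⟨-, hc⟩
    refine (pi_norm_le_iff_of_nonneg ((Finset.sum_nonneg fun i _ => abs_nonneg (c i)).trans hc)).2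
      fun i => ?_
    rw [Real.norm_eq_abs]
    exact (Finset.single_le_sum (fun j _ => abs_nonneg (c j)) (Finset.mem_univ i)).trans hc

lemma abs_dotProduct_le_mul_sum_abs {v w : ι → ℝ} {m : ℝ} (h : ∀ i, w i ≠ 0 → |v i| ≤ m) :
    |v ⬝ᵥ w| ≤ m * ∑ i, |w i| := by
  rw [Finset.mul_sum]
  refine (Finset.abs_sum_le_sum_abs _ _).trans (Finset.sum_le_sum fun i _ => ?_)
  rw [abs_mul]
  by_cases hi : w i = 0
  · simp [hi]
  · exact mul_le_mul_of_nonneg_right (h i hi) (abs_nonneg _)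

variable (χ : Matrix ι X ℝ) (f : X → ℝ) {γ : ℝ}

lemma not_exists_approx_of_dual_certificate (hp : ∃ i, p i) {Ψ : X → ℝ}
    (hΨ : ∑ x, |Ψ x| = 1) (hsep : ∀ i, p i → γ < Ψ ⬝ᵥ f - W * |(χ *ᵥ Ψ) i|) :
    ¬ ∃ c ∈ supportedL1Ball p W, ∀ x, |(c ᵥ* χ) x - f x| ≤ γ := by
  classical
  rintro ⟨c, ⟨hc₀, hc⟩, hcf⟩
  obtain ⟨i₀, hi₀⟩ := hp
  obtain ⟨i₁, hi₁, hmax⟩ := Finset.exists_max_image (Finset.univ.filter p) (fun i => |(χ *ᵥ Ψ) i|)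
    ⟨i₀, Finset.mem_filter.2 ⟨Finset.mem_univ i₀, hi₀⟩⟩
  simp only [Finset.mem_filter, Finset.mem_univ, true_and] at hi₁ hmax
  have herr : |(f - c ᵥ* χ) ⬝ᵥ Ψ| ≤ γ := by
    simpa [hΨ] using abs_dotProduct_le_mul_sum_abs (v := f - c ᵥ* χ) (w := Ψ)
      fun x _ => (abs_sub_comm _ _).trans_le (hcf x)
  have hfit : |(χ *ᵥ Ψ) ⬝ᵥ c| ≤ W * |(χ *ᵥ Ψ) i₁| := by
    refine (abs_dotProduct_le_mul_sum_abs fun i hi => hmax i ?_).trans ?_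
    · exact not_not.1 (mt (hc₀ i) hi)
    · rw [mul_comm]; exact mul_le_mul_of_nonneg_right hc (abs_nonneg _)
  have hsplit : Ψ ⬝ᵥ f = (f - c ᵥ* χ) ⬝ᵥ Ψ + (χ *ᵥ Ψ) ⬝ᵥ c := by
    rw [sub_dotProduct, dotProduct_comm (χ *ᵥ Ψ), dotProduct_mulVec, dotProduct_comm f]
    ring
  linarith [hsep i₁ hi₁, le_abs_self ((f - c ᵥ* χ) ⬝ᵥ Ψ), le_abs_self ((χ *ᵥ Ψ) ⬝ᵥ c)]

lemma exists_dual_certificate_of_not_exists_approx (hγ : 0 ≤ γ) (hW : 0 ≤ W)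
    (h : ¬ ∃ c ∈ supportedL1Ball p W, ∀ x, |(c ᵥ* χ) x - f x| ≤ γ) :
    ∃ Ψ : X → ℝ, ∑ x, |Ψ x| = 1 ∧ ∀ i, p i → γ < Ψ ⬝ᵥ f - W * |(χ *ᵥ Ψ) i| := by
  classical
  have hdisj : Disjoint ((· ᵥ* χ) '' supportedL1Ball p W) (closedBall f γ) := by
    refine Set.disjoint_left.2 ?_
    rintro _ ⟨c, hc, rfl⟩ hcf
    rw [mem_closedBall, dist_pi_le_iff hγ] at hcf
    exact h ⟨c, hc, fun x => by simpa [Real.dist_eq] using hcf x⟩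
  obtain ⟨Φ, u, hK, hB⟩ := exists_dotProduct_separation
    (convex_supportedL1Ball.linear_image (vecMulLinear χ))
    (isCompact_supportedL1Ball.image (vecMulLinear χ).continuous_of_finiteDimensional)
    (convex_closedBall f γ) isClosed_closedBall hdisj
  set v := χ *ᵥ Φ
  have hK' (c) (hc : c ∈ supportedL1Ball p W) : c ⬝ᵥ v < u := by
    have hc' : Φ ⬝ᵥ (c ᵥ* χ) < u := hK _ ⟨c, hc, rfl⟩
    rwa [dotProduct_comm, ← dotProduct_mulVec] at hc'
  have hu : 0 < u := by simpa using hK' 0 (zero_mem_supportedL1Ball hW)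
  have hv (i) (hi : p i) : W * |v i| < u := by
    have hpos := hK' _ (single_mem_supportedL1Ball hi (a := W) (abs_of_nonneg hW).le)
    have hneg := hK' _ (single_mem_supportedL1Ball hi (a := -W) (by rw [abs_neg, abs_of_nonneg hW]))
    rw [single_dotProduct] at hpos hneg
    rw [← abs_of_nonneg hW, ← abs_mul, abs_lt]
    constructor <;> linarith
  obtain ⟨b, hb, hΦb⟩ := exists_mem_closedBall_dotProduct_eq f Φ hγ
  have hfar : γ * ∑ x, |Φ x| < Φ ⬝ᵥ f - u := by linarith [hB b hb]
  have hN : 0 < ∑ x, |Φ x| := by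
    refine (Finset.sum_nonneg fun x _ => abs_nonneg (Φ x)).lt_of_ne' fun hN0 => ?_
    have hΦ : Φ = 0 := funext fun x => abs_eq_zero.1
      ((Finset.sum_eq_zero_iff_of_nonneg fun x _ => abs_nonneg (Φ x)).1 hN0 x (Finset.mem_univ x))
    rw [hN0, hΦ, zero_dotProduct] at hfar
    linarith
  exact exists_normalized_dual_certificate χ f hN fun i hi => by linarith [hv i hi]

lemma not_exists_approx_iff_exists_dual_certificate (hp : ∃ i, p i) (hγ : 0 ≤ γ) (hW : 0 ≤ W) :
    (¬ ∃ c ∈ supportedL1Ball p W, ∀ x, |(c ᵥ* χ) x - f x| ≤ γ) ↔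
      ∃ Ψ : X → ℝ, ∑ x, |Ψ x| = 1 ∧ ∀ i, p i → γ < Ψ ⬝ᵥ f - W * |(χ *ᵥ Ψ) i| :=
  ⟨exists_dual_certificate_of_not_exists_approx χ f hγ hW,
    fun ⟨_, hΨ, hsep⟩ => not_exists_approx_of_dual_certificate χ f hp hΨ hsep⟩

end Duality

lemma polyDegree_le_iff {ι : Type*} [Fintype ι] (c : Finset ι → ℝ) (t : ℕ) :
    polyDegree c ≤ t ↔ ∀ S, ¬ S.card ≤ t → c S = 0 := by
  simp only [polyDegree, Finset.sup_le_iff, Finset.mem_filter, Finset.mem_univ, true_and]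
  exact forall_congr' fun S => not_imp_comm

theorem stmt_8_general (d t : ℕ) (γ : ℝ) (hγ : 0 ≤ γ) (W : ℝ) (hW : 0 < W)
    (Y : Finset (Fin d → ℝ)) (f : (Fin d → ℝ) → ℝ) :
    (¬ ∃ c : Finset (Fin d) → ℝ, polyDegree c ≤ t ∧ weight c ≤ W ∧
        ∀ y ∈ Y, |evalPoly c y - f y| ≤ γ) ↔
    ∃ Ψ : (Fin d → ℝ) → ℝ,
      (∑ y ∈ Y, |Ψ y|) = 1 ∧
      ∀ S : Finset (Fin d), S.card ≤ t →
        γ < (∑ y ∈ Y, Ψ y * f y) - W * |∑ y ∈ Y, Ψ y * ∏ i ∈ S, y i| := by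
  let χ : Matrix (Finset (Fin d)) Y ℝ := fun S y => ∏ i ∈ S, (y : Fin d → ℝ) i
  have hprimal : (∃ c : Finset (Fin d) → ℝ, polyDegree c ≤ t ∧ weight c ≤ W ∧
      ∀ y ∈ Y, |evalPoly c y - f y| ≤ γ) ↔
      ∃ c ∈ supportedL1Ball (·.card ≤ t) W, ∀ y : Y, |(c ᵥ* χ) y - f y| ≤ γ := by
    simp only [supportedL1Ball, polyDegree_le_iff, Set.mem_ofPred_eq, and_assoc, Subtype.forall]
    rfl
  have hdual (Ψ : (Fin d → ℝ) → ℝ) (S : Finset (Fin d)) :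
      (χ *ᵥ (Ψ ∘ (↑))) S = ∑ y ∈ Y, Ψ y * ∏ i ∈ S, y i := by
    simp only [mulVec, dotProduct, χ, Function.comp_apply, mul_comm]
    exact Finset.sum_coe_sort Y fun y => Ψ y * ∏ i ∈ S, y i
  rw [hprimal, not_exists_approx_iff_exists_dual_certificate χ (fun y : Y => f y)
    (p := (·.card ≤ t)) ⟨∅, by simp⟩ hγ hW.le, Subtype.val_injective.surjective_comp_right.exists]
  refine exists_congr fun Ψ => ?_
  rw [← Finset.sum_coe_sort Y (|Ψ ·|), ← Finset.sum_coe_sort Y (fun y => Ψ y * f y)]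
  simp only [hdual]
  rfl

theorem stmt_8 (d t : ℕ) (γ : ℝ) (hγ : 0 ≤ γ) (W : ℝ) (hW : 0 < W)
    (Y : Finset (Fin d → ℝ)) (f : (Fin d → ℝ) → ℝ)
    (hf : ∀ y ∈ Y, f y = 1 ∨ f y = -1) :
    (¬ ∃ c : Finset (Fin d) → ℝ, polyDegree c ≤ t ∧ weight c ≤ W ∧
        ∀ y ∈ Y, |evalPoly c y - f y| ≤ γ) ↔
    ∃ Ψ : (Fin d → ℝ) → ℝ,
      (∑ y ∈ Y, |Ψ y|) = 1 ∧
      ∀ S : Finset (Fin d), S.card ≤ t →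
        γ < (∑ y ∈ Y, Ψ y * f y) - W * |∑ y ∈ Y, Ψ y * ∏ i ∈ S, y i| :=
  stmt_8_general d t γ hγ W hW Y f
end

section
/- For every d ≥ 1 and every t ∈ ℕ, the degree-t non-constant margin weight of the OR function restricted to inputs of Hamming weight at most 1 satisfies w*(OR_d|_{H_{d,1}}, t) ≥ d/t. -/
private theorem sumif (d : ℕ) (S : Finset (Fin d)) :
    (∑ i : Fin d, (if i ∈ S then (-1:ℝ) else 1)) = d - 2 * S.card := by
  classical
  rw [Finset.sum_ite, Finset.sum_const, Finset.sum_const]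
  have h1 : (Finset.univ.filter fun i => i ∈ S) = S := by simp
  have h2 : (Finset.univ.filter fun i => i ∉ S).card = d - S.card := by
    rw [Finset.filter_not, Finset.card_sdiff_of_subset (by simp [h1])]
    simp [h1]
  have h3 : S.card ≤ d := by simpa using S.card_le_univ
  rw [h1, h2]
  simp [nsmul_eq_mul, Nat.cast_sub h3]
  ring

theorem stmt_10 (d t : ℕ) (hd : 1 ≤ d) (c : Finset (Fin d) → ℝ)
    (hdeg : polyDegree c ≤ t)
    (hmargin : ∀ y ∈ cube d, hamming y ≤ 1 → 1 ≤ ORd y * evalPoly c y) :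
    (d : ℝ) / t ≤ ∑ S ∈ Finset.univ.filter (fun S : Finset (Fin d) => S ≠ ∅), |c S| := by
  classical
  have hW0 : (0:ℝ) ≤ ∑ S ∈ Finset.univ.filter (fun S : Finset (Fin d) => S ≠ ∅), |c S| :=
    Finset.sum_nonneg fun _ _ => abs_nonneg _
  rcases Nat.eq_zero_or_pos t with ht | ht
  · simp [ht, hW0]
  -- the all-ones point
  set one : Fin d → ℝ := fun _ => 1 with hone
  have h1cube : one ∈ cube d := fun i => Or.inl rfl
  have h1ham : hamming one ≤ 1 := by
    have : (Finset.univ.filter fun i => one i = -1) = ∅ := by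
      apply Finset.filter_false_of_mem; intro i _; simp [hone]; norm_num
    simp [hamming, this]
  have hOR1 : ORd one = 1 := by
    rw [ORd, if_neg]; push_neg; intro i; simp [hone]; norm_num
  have h1 : (1:ℝ) ≤ evalPoly c one := by
    have := hmargin one h1cube h1ham
    rwa [hOR1, one_mul] at this
  -- the e_i points
  set e : Fin d → Fin d → ℝ := fun i j => if j = i then -1 else 1 with he
  have hecube : ∀ i, e i ∈ cube d := fun i j => by
    by_cases h : j = i <;> simp [he, h]
  have heham : ∀ i, hamming (e i) ≤ 1 := by
    intro i
    have : (Finset.univ.filter fun j => e i j = -1) = {i} := by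
      ext j; by_cases h : j = i <;> simp [he, h] <;> norm_num
    simp [hamming, this]
  have hORe : ∀ i, ORd (e i) = -1 := fun i => by
    rw [ORd, if_pos ⟨i, by simp [he]⟩]
  have h2 : ∀ i, evalPoly c (e i) ≤ -1 := by
    intro i
    have := hmargin (e i) (hecube i) (heham i)
    rw [hORe i, neg_one_mul] at this
    linarith
  -- evaluate
  have heval1 : evalPoly c one = ∑ S : Finset (Fin d), c S := by
    simp [evalPoly, hone]
  have hevale : ∀ i, evalPoly c (e i) = ∑ S : Finset (Fin d), c S * (if i ∈ S then -1 else 1) := by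
    intro i
    unfold evalPoly
    congr 1; ext S
    congr 1
    simp [he, Finset.prod_ite_eq']
  -- key sum identity
  have hkey : (d:ℝ) * evalPoly c one - ∑ i : Fin d, evalPoly c (e i)
      = 2 * ∑ S : Finset (Fin d), c S * S.card := by
    rw [heval1]
    have : ∑ i : Fin d, evalPoly c (e i)
        = ∑ S : Finset (Fin d), c S * ((d:ℝ) - 2 * S.card) := by
      rw [Finset.sum_congr rfl fun i _ => hevale i, Finset.sum_comm]
      congr 1; ext S
      rw [← Finset.mul_sum, sumif]
    rw [this, Finset.mul_sum, ← Finset.sum_sub_distrib, Finset.mul_sum]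
    congr 1; ext S; ring
  -- lower bound on key
  have hlow : 2 * (d:ℝ) ≤ 2 * ∑ S : Finset (Fin d), c S * S.card := by
    rw [← hkey]
    have hs : ∑ i : Fin d, evalPoly c (e i) ≤ ∑ i : Fin d, (-1:ℝ) :=
      Finset.sum_le_sum fun i _ => h2 i
    simp at hs
    have hdp : (d:ℝ) * 1 ≤ (d:ℝ) * evalPoly c one :=
      mul_le_mul_of_nonneg_left h1 (by positivity)
    linarith
  have hcSd : (d:ℝ) ≤ ∑ S : Finset (Fin d), c S * S.card := by linarith
  -- upper bound: each term ≤ |c S| * t, zero for ∅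
  have hub : ∑ S : Finset (Fin d), c S * S.card
      ≤ ∑ S ∈ Finset.univ.filter (fun S : Finset (Fin d) => S ≠ ∅), |c S| * t := by
    rw [← Finset.sum_filter_add_sum_filter_not Finset.univ (fun S : Finset (Fin d) => S ≠ ∅)
      (fun S => c S * (S.card : ℝ))]
    have hz : ∑ S ∈ Finset.univ.filter (fun S : Finset (Fin d) => ¬ S ≠ ∅),
        c S * (S.card : ℝ) = 0 := by
      apply Finset.sum_eq_zero
      intro S hS
      simp at hS
      simp [hS]
    rw [hz, add_zero]
    apply Finset.sum_le_sum
    intro S hS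
    by_cases hc : c S = 0
    · simp [hc]
    · have hcard : S.card ≤ t := by
        refine le_trans (le_trans ?_ hdeg) le_rfl
        exact Finset.le_sup (f := Finset.card) (by simp [hc])
      calc c S * (S.card:ℝ) ≤ |c S| * (S.card:ℝ) := by
            apply mul_le_mul_of_nonneg_right (le_abs_self _) (by positivity)
        _ ≤ |c S| * t := by
            apply mul_le_mul_of_nonneg_left _ (abs_nonneg _)
            exact_mod_cast hcard
  rw [← Finset.sum_mul] at hub
  have ht' : (0:ℝ) < t := by exact_mod_cast ht
  rw [div_le_iff₀ ht']
  calc (d:ℝ) ≤ ∑ S : Finset (Fin d), c S * S.card := hcSd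
    _ ≤ _ := hub
end
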